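/- (Inf-convolution regularization) Let g : [0,T]×ℝ×ℝ^n → ℝ be continuous in (y,z) with -（l_t + c_t|y| + q_p(z)） ≤ g(t,y,z) ≤ l_t + c_t|y| + (1/2)|z|², where q_p(z) = (1/2)|z|² for |z| ≤ p and p|z| - p²/2 for |z| > p, and l, c bounded by C̄. Define g_n(t,y,z) = inf_{u,w} (g(t,u,w) + n|y-u| + n|z-w|). Then for n ≥ max(C̄, p): (i) g_n is n-Lipschitz in (y,z); (ii) |g_n(t,y,z)| ≤ l_t + c_t|y| + max(q_p(z), q_n(z)) ≤ l_t + c_t|y| + (1/2)|z|²; (iii) the sequence (g_n) is nondecreasing in n; (iv) if (y_k, z_k) → (y,z) then g_{n_k}(t, y_k, z_k) → g(t,y,z) along any sequence n_k → ∞ (stability of the approximation). -/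

import Mathlib

open Filter

/-- The truncated quadratic function `q_p(z) = |z|²/2` for `|z| ≤ p`,
`p|z| - p²/2` for `|z| > p`. -/
noncomputable def qcap {E : Type*} [NormedAddCommGroup E] (p : ℝ) (z : E) : ℝ :=
  if ‖z‖ ≤ p then ‖z‖ ^ 2 / 2 else p * ‖z‖ - p ^ 2 / 2

/-- The inf-convolution `g_n(t,y,z) = inf_{u,w} (g(t,u,w) + n|y-u| + n‖z-w‖)`. -/
noncomputable def infConvReg {E : Type*} [NormedAddCommGroup E]
    (g : ℝ → ℝ → E → ℝ) (n : ℝ) (t y : ℝ) (z : E) : ℝ :=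
  ⨅ uw : ℝ × E, (g t uw.1 uw.2 + n * |y - uw.1| + n * ‖z - uw.2‖)

/-
The key observation is that `q_n` is itself an inf-convolution,
`q_n(z) = min_w (‖w‖²/2 + n‖z - w‖)`, attained at the radial projection of `z` onto the ball of
radius `n`. Testing the infimum defining `g_n` at `u = y` and that `w` gives the upper bound, and
the same formula makes `q_p` `p`-Lipschitz, so the lower growth bound of `g` at `(u, w)` only
loses `C̄|y - u| + p‖z - w‖` against the one at `(y, z)`. Hence, for `n ≥ N := max C̄ p`, the
penalised objective is at least `-(l + c|y| + q_p(z)) + (n - N)(|y - u| + ‖z - w‖)`: this gives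
the lower bound, and it forces near-minimisers of `g_{n_k}(y_k, z_k)` to converge to `(y, z)`,
where continuity of `g` closes the squeeze `g(u_k, w_k) - ε_k ≤ g_{n_k}(y_k, z_k) ≤ g(y_k, z_k)`.
-/

open Topology

section Qcap

variable {E : Type*} [NormedAddCommGroup E] {p : ℝ}

lemma qcap_le_half_sq_add_mul (hp : 0 ≤ p) (z w : E) : qcap p z ≤ ‖w‖ ^ 2 / 2 + p * ‖z - w‖ := by
  have hzw : ‖z‖ - ‖w‖ ≤ ‖z - w‖ := norm_sub_norm_le z w
  have hw := norm_nonneg w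
  unfold qcap
  split_ifs with hz
  · rcases le_total ‖z‖ ‖w‖ with hzw' | hzw'
    · nlinarith [norm_nonneg z, norm_nonneg (z - w)]
    · nlinarith [mul_le_mul_of_nonneg_left hzw (by linarith : 0 ≤ p)]
  · nlinarith [mul_le_mul_of_nonneg_left hzw hp, sq_nonneg (‖w‖ - p)]

lemma qcap_le_half_sq (hp : 0 ≤ p) (z : E) : qcap p z ≤ ‖z‖ ^ 2 / 2 := by
  simpa using qcap_le_half_sq_add_mul hp z z

lemma qcap_le_mul_norm (hp : 0 ≤ p) (z : E) : qcap p z ≤ p * ‖z‖ := by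
  simpa using qcap_le_half_sq_add_mul hp z 0

lemma exists_half_sq_add_mul_eq_qcap [NormedSpace ℝ E] (hp : 0 ≤ p) (z : E) :
    ∃ w : E, ‖w‖ ^ 2 / 2 + p * ‖z - w‖ = qcap p z := by
  unfold qcap
  split_ifs with hz
  · exact ⟨z, by simp⟩
  · have hz0 : 0 < ‖z‖ := hp.trans_lt (not_le.1 hz)
    have hscale : p / ‖z‖ ≤ 1 := (div_le_one hz0).2 (not_le.1 hz).le
    refine ⟨(p / ‖z‖) • z, ?_⟩
    rw [show z - (p / ‖z‖) • z = (1 - p / ‖z‖) • z by rw [sub_smul, one_smul], norm_smul,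
      norm_smul, Real.norm_of_nonneg (div_nonneg hp hz0.le),
      Real.norm_of_nonneg (sub_nonneg.2 hscale), div_mul_cancel₀ _ hz0.ne', sub_mul, one_mul,
      div_mul_cancel₀ _ hz0.ne']
    ring

lemma qcap_le_add_mul [NormedSpace ℝ E] (hp : 0 ≤ p) (z z' : E) :
    qcap p z ≤ qcap p z' + p * ‖z - z'‖ := by
  obtain ⟨w, hw⟩ := exists_half_sq_add_mul_eq_qcap hp z'
  calc qcap p z ≤ ‖w‖ ^ 2 / 2 + p * ‖z - w‖ := qcap_le_half_sq_add_mul hp z w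
    _ ≤ ‖w‖ ^ 2 / 2 + p * (‖z - z'‖ + ‖z' - w‖) := by
      gcongr; exact norm_sub_le_norm_sub_add_norm_sub z z' w
    _ = qcap p z' + p * ‖z - z'‖ := by rw [← hw]; ring

end Qcap

section InfConv

variable {E : Type*} [NormedAddCommGroup E] {g : ℝ → ℝ → E → ℝ} {n t y : ℝ} {z : E}

lemma infConvReg_le
    (hb : BddBelow (Set.range fun uw : ℝ × E => g t uw.1 uw.2 + n * |y - uw.1| + n * ‖z - uw.2‖))
    (u : ℝ) (w : E) : infConvReg g n t y z ≤ g t u w + n * |y - u| + n * ‖z - w‖ :=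
  ciInf_le hb (u, w)

lemma infConvReg_le_self
    (hb : BddBelow (Set.range fun uw : ℝ × E => g t uw.1 uw.2 + n * |y - uw.1| + n * ‖z - uw.2‖)) :
    infConvReg g n t y z ≤ g t y z := by
  simpa using infConvReg_le hb y z

lemma le_infConvReg {a : ℝ} (h : ∀ u w, a ≤ g t u w + n * |y - u| + n * ‖z - w‖) :
    a ≤ infConvReg g n t y z :=
  le_ciInf fun uw => h uw.1 uw.2

lemma infConvReg_le_add_mul (hn : 0 ≤ n)
    (hb : BddBelow (Set.range fun uw : ℝ × E => g t uw.1 uw.2 + n * |y - uw.1| + n * ‖z - uw.2‖))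
    (y' : ℝ) (z' : E) :
    infConvReg g n t y z ≤ infConvReg g n t y' z' + n * (|y - y'| + ‖z - z'‖) := by
  suffices infConvReg g n t y z - n * (|y - y'| + ‖z - z'‖) ≤ infConvReg g n t y' z' by linarith
  refine le_infConvReg fun u w => ?_
  have hy : |y - u| ≤ |y - y'| + |y' - u| := abs_sub_le y y' u
  have hz : ‖z - w‖ ≤ ‖z - z'‖ + ‖z' - w‖ := norm_sub_le_norm_sub_add_norm_sub z z' w
  have := infConvReg_le hb u w
  nlinarith [mul_le_mul_of_nonneg_left hy hn, mul_le_mul_of_nonneg_left hz hn]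

lemma abs_infConvReg_sub_le (hn : 0 ≤ n)
    (hb : ∀ y z, BddBelow (Set.range fun uw : ℝ × E =>
      g t uw.1 uw.2 + n * |y - uw.1| + n * ‖z - uw.2‖))
    (y y' : ℝ) (z z' : E) :
    |infConvReg g n t y z - infConvReg g n t y' z'| ≤ n * (|y - y'| + ‖z - z'‖) := by
  have h₁ := infConvReg_le_add_mul hn (hb y z) y' z'
  have h₂ := infConvReg_le_add_mul hn (hb y' z') y z
  rw [abs_sub_comm y', norm_sub_rev z'] at h₂
  exact abs_sub_le_iff.2 ⟨by linarith, by linarith⟩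

lemma infConvReg_mono {m : ℝ}
    (hb : BddBelow (Set.range fun uw : ℝ × E => g t uw.1 uw.2 + n * |y - uw.1| + n * ‖z - uw.2‖))
    (hnm : n ≤ m) : infConvReg g n t y z ≤ infConvReg g m t y z :=
  ciInf_mono hb fun uw => by gcongr

lemma infConvReg_le_add_qcap [NormedSpace ℝ E] {l c : ℝ → ℝ} (hn : 0 ≤ n)
    (hup : ∀ t y z, g t y z ≤ l t + c t * |y| + ‖z‖ ^ 2 / 2)
    (hb : BddBelow (Set.range fun uw : ℝ × E => g t uw.1 uw.2 + n * |y - uw.1| + n * ‖z - uw.2‖)) :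
    infConvReg g n t y z ≤ l t + c t * |y| + qcap n z := by
  obtain ⟨w, hw⟩ := exists_half_sq_add_mul_eq_qcap hn z
  have hyw : infConvReg g n t y z ≤ g t y w + n * ‖z - w‖ := by simpa using infConvReg_le hb y w
  linarith [hup t y w]

end InfConv

section Growth

variable {E : Type*} [NormedAddCommGroup E] [NormedSpace ℝ E] {g : ℝ → ℝ → E → ℝ}
  {l c : ℝ → ℝ} {Cbar p : ℝ}

lemma neg_growth_add_mul_le (hp : 0 ≤ p) (hc : ∀ t, 0 ≤ c t ∧ c t ≤ Cbar)
    (hlow : ∀ t y z, -(l t + c t * |y| + qcap p z) ≤ g t y z) (n t y : ℝ) (z : E) (u : ℝ) (w : E) :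
    -(l t + c t * |y| + qcap p z) + (n - max Cbar p) * (|y - u| + ‖z - w‖)
      ≤ g t u w + n * |y - u| + n * ‖z - w‖ := by
  have hu : |u| ≤ |y| + |y - u| := by
    linarith [abs_sub_abs_le_abs_sub u y, abs_sub_comm u y]
  have hq : qcap p w ≤ qcap p z + p * ‖z - w‖ := by
    simpa [norm_sub_rev w z] using qcap_le_add_mul hp w z
  have := hlow t u w
  nlinarith [mul_le_mul_of_nonneg_left hu (hc t).1, mul_le_mul_of_nonneg_right (hc t).2
    (abs_nonneg (y - u)), mul_le_mul_of_nonneg_right (le_max_left Cbar p) (abs_nonneg (y - u)),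
    mul_le_mul_of_nonneg_right (le_max_right Cbar p) (norm_nonneg (z - w))]

lemma neg_growth_le_infConv_objective (hp : 0 ≤ p) (hc : ∀ t, 0 ≤ c t ∧ c t ≤ Cbar)
    (hlow : ∀ t y z, -(l t + c t * |y| + qcap p z) ≤ g t y z) {n : ℝ} (hn : max Cbar p ≤ n)
    (t y : ℝ) (z : E) (u : ℝ) (w : E) :
    -(l t + c t * |y| + qcap p z) ≤ g t u w + n * |y - u| + n * ‖z - w‖ := by
  have := neg_growth_add_mul_le hp hc hlow n t y z u w
  nlinarith [mul_nonneg (sub_nonneg.2 hn) (add_nonneg (abs_nonneg (y - u)) (norm_nonneg (z - w)))]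

lemma bddBelow_infConv_objective (hp : 0 ≤ p) (hc : ∀ t, 0 ≤ c t ∧ c t ≤ Cbar)
    (hlow : ∀ t y z, -(l t + c t * |y| + qcap p z) ≤ g t y z) {n : ℝ} (hn : max Cbar p ≤ n)
    (t y : ℝ) (z : E) :
    BddBelow (Set.range fun uw : ℝ × E => g t uw.1 uw.2 + n * |y - uw.1| + n * ‖z - uw.2‖) :=
  ⟨_, Set.forall_mem_range.2 fun _ => neg_growth_le_infConv_objective hp hc hlow hn t y z _ _⟩

lemma neg_growth_le_infConvReg (hp : 0 ≤ p) (hc : ∀ t, 0 ≤ c t ∧ c t ≤ Cbar)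
    (hlow : ∀ t y z, -(l t + c t * |y| + qcap p z) ≤ g t y z) {n : ℝ} (hn : max Cbar p ≤ n)
    (t y : ℝ) (z : E) :
    -(l t + c t * |y| + qcap p z) ≤ infConvReg g n t y z :=
  le_infConvReg (neg_growth_le_infConv_objective hp hc hlow hn t y z)

end Growth

lemma tendsto_zero_of_mul_le {ι : Type*} {L : Filter ι} {a b r : ι → ℝ} {β : ℝ}
    (ha : ∀ᶠ k in L, 0 ≤ a k) (hr : Tendsto r L atTop) (hb : Tendsto b L (𝓝 β))
    (h : ∀ᶠ k in L, r k * a k ≤ b k) : Tendsto a L (𝓝 0) := by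
  refine tendsto_of_tendsto_of_tendsto_of_le_of_le' tendsto_const_nhds (hb.div_atTop hr) ha ?_
  filter_upwards [h, hr.eventually_gt_atTop 0] with k hk hpos
  rw [le_div_iff₀ hpos, mul_comm]
  exact hk

section Convergence

variable {E : Type*} [NormedAddCommGroup E] [NormedSpace ℝ E] {g : ℝ → ℝ → E → ℝ}
  {l c : ℝ → ℝ} {Cbar p : ℝ}

lemma mul_penalty_le_of_near_min (hp : 0 ≤ p) (hc : ∀ t, 0 ≤ c t ∧ c t ≤ Cbar)
    (hlow : ∀ t y z, -(l t + c t * |y| + qcap p z) ≤ g t y z) {n t y ε : ℝ} {z : E}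
    (hn : max Cbar p ≤ n) {u : ℝ} {w : E}
    (hmin : g t u w + n * |y - u| + n * ‖z - w‖ ≤ infConvReg g n t y z + ε) :
    (n - max Cbar p) * (|y - u| + ‖z - w‖) ≤ g t y z + ε + (l t + c t * |y| + p * ‖z‖) := by
  have := neg_growth_add_mul_le hp hc hlow n t y z u w
  have := infConvReg_le_self (bddBelow_infConv_objective hp hc hlow hn t y z)
  have := qcap_le_mul_norm hp z
  linarith

theorem tendsto_infConvReg (hp : 0 ≤ p) (hc : ∀ t, 0 ≤ c t ∧ c t ≤ Cbar)
    (hlow : ∀ t y z, -(l t + c t * |y| + qcap p z) ≤ g t y z) {t y : ℝ} {z : E}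
    (hcont : ContinuousAt (fun yz : ℝ × E => g t yz.1 yz.2) (y, z))
    {nk yk : ℕ → ℝ} {zk : ℕ → E} (hnk : ∀ k, max Cbar p ≤ nk k) (hnk_top : Tendsto nk atTop atTop)
    (hyk : Tendsto yk atTop (𝓝 y)) (hzk : Tendsto zk atTop (𝓝 z)) :
    Tendsto (fun k => infConvReg g (nk k) t (yk k) (zk k)) atTop (𝓝 (g t y z)) := by
  have hb k := bddBelow_infConv_objective hp hc hlow (hnk k) t (yk k) (zk k)
  set ε : ℕ → ℝ := fun k => 1 / ((k : ℝ) + 1)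
  have hε : Tendsto ε atTop (𝓝 0) := tendsto_one_div_add_atTop_nhds_zero_nat
  have hnear k : ∃ uw : ℝ × E, g t uw.1 uw.2 + nk k * |yk k - uw.1| + nk k * ‖zk k - uw.2‖
      < infConvReg g (nk k) t (yk k) (zk k) + ε k :=
    exists_lt_of_ciInf_lt (lt_add_of_pos_right _ (by positivity))
  choose uw huw using hnear
  have hg : Tendsto (fun k => g t (yk k) (zk k)) atTop (𝓝 (g t y z)) :=
    hcont.tendsto.comp (hyk.prodMk_nhds hzk)
  have hpen : Tendsto (fun k => |yk k - (uw k).1| + ‖zk k - (uw k).2‖) atTop (𝓝 0) :=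
    tendsto_zero_of_mul_le (.of_forall fun k => by positivity)
      (by simpa only [sub_eq_add_neg] using tendsto_atTop_add_const_right _ (-max Cbar p) hnk_top)
      ((hg.add hε).add (((hyk.abs.const_mul _).const_add _).add (hzk.norm.const_mul p)))
      (.of_forall fun k => mul_penalty_le_of_near_min hp hc hlow (hnk k) (huw k).le)
  have hu : Tendsto (fun k => (uw k).1) atTop (𝓝 y) := by
    have : Tendsto (fun k => yk k - (uw k).1) atTop (𝓝 0) :=
      squeeze_zero_norm (fun k => le_add_of_nonneg_right (norm_nonneg _)) hpen
    simpa using hyk.sub this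
  have hw : Tendsto (fun k => (uw k).2) atTop (𝓝 z) := by
    have : Tendsto (fun k => zk k - (uw k).2) atTop (𝓝 0) :=
      squeeze_zero_norm (fun k => le_add_of_nonneg_left (abs_nonneg _)) hpen
    simpa using hzk.sub this
  have hlower : Tendsto (fun k => g t (uw k).1 (uw k).2 - ε k) atTop (𝓝 (g t y z)) := by
    simpa using (hcont.tendsto.comp (hu.prodMk_nhds hw)).sub hε
  refine tendsto_of_tendsto_of_tendsto_of_le_of_le hlower hg (fun k => ?_)
    (fun k => infConvReg_le_self (hb k))
  have hnk0 : 0 ≤ nk k := hp.trans ((le_max_right _ _).trans (hnk k))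
  have := huw k
  have := mul_nonneg hnk0 (abs_nonneg (yk k - (uw k).1))
  have := mul_nonneg hnk0 (norm_nonneg (zk k - (uw k).2))
  show g t (uw k).1 (uw k).2 - ε k ≤ _
  linarith

end Convergence

theorem inf_convolution_regularization_general {d : ℕ}
    (g : ℝ → ℝ → EuclideanSpace ℝ (Fin d) → ℝ)
    (l c : ℝ → ℝ) (Cbar p : ℝ) (hp : 0 < p)
    (hc : ∀ t, 0 ≤ c t ∧ c t ≤ Cbar)
    (hcont : ∀ t, Continuous fun yz : ℝ × EuclideanSpace ℝ (Fin d) => g t yz.1 yz.2)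
    (hlow : ∀ t y z, -(l t + c t * |y| + qcap p z) ≤ g t y z)
    (hup : ∀ t y z, g t y z ≤ l t + c t * |y| + ‖z‖ ^ 2 / 2) :
    (∀ n, max Cbar p ≤ n → ∀ t y y' (z z' : EuclideanSpace ℝ (Fin d)),
      |infConvReg g n t y z - infConvReg g n t y' z'| ≤ n * (|y - y'| + ‖z - z'‖)) ∧
    (∀ n, max Cbar p ≤ n → ∀ t y (z : EuclideanSpace ℝ (Fin d)),
      |infConvReg g n t y z| ≤ l t + c t * |y| + max (qcap p z) (qcap n z) ∧
        l t + c t * |y| + max (qcap p z) (qcap n z) ≤ l t + c t * |y| + ‖z‖ ^ 2 / 2) ∧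
    (∀ n m, max Cbar p ≤ n → n ≤ m → ∀ t y (z : EuclideanSpace ℝ (Fin d)),
      infConvReg g n t y z ≤ infConvReg g m t y z) ∧
    (∀ t y (z : EuclideanSpace ℝ (Fin d)) (nk : ℕ → ℝ) (yk : ℕ → ℝ)
        (zk : ℕ → EuclideanSpace ℝ (Fin d)),
      (∀ k, max Cbar p ≤ nk k) → Tendsto nk atTop atTop →
      Tendsto yk atTop (nhds y) → Tendsto zk atTop (nhds z) →
      Tendsto (fun k => infConvReg g (nk k) t (yk k) (zk k)) atTop (nhds (g t y z))) := by
  have hn0 {n : ℝ} (hn : max Cbar p ≤ n) : 0 ≤ n := hp.le.trans ((le_max_right _ _).trans hn)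
  have hb {n : ℝ} (hn : max Cbar p ≤ n) := bddBelow_infConv_objective hp.le hc hlow hn
  refine ⟨fun n hn t => abs_infConvReg_sub_le (hn0 hn) (hb hn t), fun n hn t y z => ⟨?_, ?_⟩,
    fun n m hn hnm t y z => infConvReg_mono (hb hn t y z) hnm,
    fun t y z nk yk zk hnk hnk_top hyk hzk =>
      tendsto_infConvReg hp.le hc hlow (hcont t).continuousAt hnk hnk_top hyk hzk⟩
  · have hlower := neg_growth_le_infConvReg hp.le hc hlow hn t y z
    have hupper := infConvReg_le_add_qcap (hn0 hn) hup (hb hn t y z)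
    exact abs_le.2 ⟨by linarith [le_max_left (qcap p z) (qcap n z)],
      by linarith [le_max_right (qcap p z) (qcap n z)]⟩
  · gcongr
    exact max_le (qcap_le_half_sq hp.le z) (qcap_le_half_sq (hn0 hn) z)

/-- **Regularization by inf-convolution of a quadratic coefficient.**
Under the two-sided growth bound `-(l_t + c_t|y| + q_p(z)) ≤ g ≤ l_t + c_t|y| + |z|²/2`
with `0 ≤ l, c ≤ C̄`, the inf-convolutions `g_n` are, for `n ≥ max C̄ p`:
(i) `n`-Lipschitz in `(y,z)`; (ii) bounded by
`|g_n| ≤ l_t + c_t|y| + max (q_p z) (q_n z) ≤ l_t + c_t|y| + |z|²/2`;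
(iii) nondecreasing in `n`; and (iv) `g_{n_k}(t, y_k, z_k) → g(t,y,z)` whenever
`n_k → ∞` and `(y_k, z_k) → (y,z)`. -/
theorem inf_convolution_regularization {d : ℕ}
    (g : ℝ → ℝ → EuclideanSpace ℝ (Fin d) → ℝ)
    (l c : ℝ → ℝ) (Cbar p : ℝ) (hp : 0 < p)
    (hl : ∀ t, 0 ≤ l t ∧ l t ≤ Cbar) (hc : ∀ t, 0 ≤ c t ∧ c t ≤ Cbar)
    (hcont : ∀ t, Continuous fun yz : ℝ × EuclideanSpace ℝ (Fin d) => g t yz.1 yz.2)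
    (hlow : ∀ t y z, -(l t + c t * |y| + qcap p z) ≤ g t y z)
    (hup : ∀ t y z, g t y z ≤ l t + c t * |y| + ‖z‖ ^ 2 / 2) :
    (∀ n, max Cbar p ≤ n → ∀ t y y' (z z' : EuclideanSpace ℝ (Fin d)),
      |infConvReg g n t y z - infConvReg g n t y' z'| ≤ n * (|y - y'| + ‖z - z'‖)) ∧
    (∀ n, max Cbar p ≤ n → ∀ t y (z : EuclideanSpace ℝ (Fin d)),
      |infConvReg g n t y z| ≤ l t + c t * |y| + max (qcap p z) (qcap n z) ∧
        l t + c t * |y| + max (qcap p z) (qcap n z) ≤ l t + c t * |y| + ‖z‖ ^ 2 / 2) ∧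
    (∀ n m, max Cbar p ≤ n → n ≤ m → ∀ t y (z : EuclideanSpace ℝ (Fin d)),
      infConvReg g n t y z ≤ infConvReg g m t y z) ∧
    (∀ t y (z : EuclideanSpace ℝ (Fin d)) (nk : ℕ → ℝ) (yk : ℕ → ℝ)
        (zk : ℕ → EuclideanSpace ℝ (Fin d)),
      (∀ k, max Cbar p ≤ nk k) → Tendsto nk atTop atTop →
      Tendsto yk atTop (nhds y) → Tendsto zk atTop (nhds z) →
      Tendsto (fun k => infConvReg g (nk k) t (yk k) (zk k)) atTop (nhds (g t y z))) :=
  inf_convolution_regularization_general g l c Cbar p hp hc hcont hlow hup
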